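/- arXiv:2406.06213 — 6 statements merged into one kernel-verified Lean document; each statement's English description precedes it below -/
import Mathlib

section
/- (Lower bound for the minimum norm estimator.) In fixed-design linear regression for a single task, suppose rank(X) = n < p (so that interpolation is feasible) and let γ_max > 0 denote the largest eigenvalue of Σ := XᵀX/n. Then any square-integrable estimator ŵ satisfying X ŵ = y almost surely — in particular the minimum norm estimator ŵ^MN := argmin{‖w − w₀‖² : X w = y} for any initialization w₀ — satisfies E‖ŵ − w*‖² ≥ σ² / γ_max. -/
/-!
Since `X ŵ = y = X w* + ε` almost surely, the noise is the image `ε = X (ŵ - w*)` of the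
estimation error. The largest eigenvalue bounds the Rayleigh quotient of `Σ = XᵀX/n`, so
`‖ε‖² ≤ n γ_max ‖ŵ - w*‖²` pointwise; taking expectations, `E‖ε‖² = n σ²` gives the bound.
-/

open MeasureTheory Matrix ProbabilityTheory

open scoped MatrixOrder in
theorem Matrix.IsHermitian.dotProduct_mulVec_le {ι : Type*} [Fintype ι] [DecidableEq ι]
    {A : Matrix ι ι ℝ} (hA : A.IsHermitian) {c : ℝ} (hc : ∀ i, hA.eigenvalues i ≤ c)
    (v : ι → ℝ) : v ⬝ᵥ (A *ᵥ v) ≤ c * (v ⬝ᵥ v) := by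
  have hle : A ≤ algebraMap ℝ _ c := le_algebraMap_of_spectrum_le (by
    rw [hA.spectrum_real_eq_range_eigenvalues]
    rintro _ ⟨i, rfl⟩
    exact hc i) hA
  simpa [sub_mulVec, dotProduct_sub, Algebra.algebraMap_eq_smul_one, smul_mulVec] using
    (Matrix.le_iff.mp hle).dotProduct_mulVec_nonneg v

theorem Matrix.sum_sq_mulVec_le {m ι : Type*} [Fintype m] [Fintype ι] [DecidableEq ι]
    (X : Matrix m ι ℝ) {r c : ℝ} (hr : 0 < r) (hA : (r⁻¹ • (Xᵀ * X)).IsHermitian)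
    (hc : ∀ i, hA.eigenvalues i ≤ c) (v : ι → ℝ) :
    ∑ i, (X *ᵥ v) i ^ 2 ≤ r * c * ∑ j, v j ^ 2 := by
  have h := hA.dotProduct_mulVec_le hc v
  rw [smul_mulVec, dotProduct_smul, smul_eq_mul, ← mulVec_mulVec, dotProduct_mulVec,
    vecMul_transpose, inv_mul_le_iff₀ hr, ← mul_assoc] at h
  simpa only [sq, dotProduct] using h

theorem min_norm_lower_bound_general
    {Ω : Type} [MeasurableSpace Ω] (μ : Measure Ω) [IsProbabilityMeasure μ]
    (n p : ℕ) (hn : 0 < n)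
    (X : Matrix (Fin n) (Fin p) ℝ)
    (hherm : (((n : ℝ)⁻¹ • (Xᵀ * X)) : Matrix (Fin p) (Fin p) ℝ).IsHermitian)
    (γmax : ℝ) (hγmax : IsGreatest (Set.range hherm.eigenvalues) γmax)
    (hγpos : 0 < γmax)
    (wstar : Fin p → ℝ)
    (σ2 : ℝ)
    (ε : Ω → Fin n → ℝ)
    (hεL2 : ∀ i, MemLp (fun ω => ε ω i) 2 μ)
    (hcov : ∀ i i', ∫ ω, ε ω i * ε ω i' ∂μ = if i = i' then σ2 else 0)
    (y : Ω → Fin n → ℝ) (hy : ∀ ω, y ω = X *ᵥ wstar + ε ω)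
    (what : Ω → Fin p → ℝ)
    (hwL2 : ∀ j, MemLp (fun ω => what ω j) 2 μ)
    (hinterp : ∀ᵐ ω ∂μ, X *ᵥ what ω = y ω) :
    ∫ ω, ∑ j, (what ω j - wstar j) ^ 2 ∂μ ≥ σ2 / γmax := by
  have hn' : (0 : ℝ) < n := Nat.cast_pos.mpr hn
  have hpointwise : ∀ᵐ ω ∂μ, ∑ i, ε ω i ^ 2 ≤ n * γmax * ∑ j, (what ω j - wstar j) ^ 2 := by
    filter_upwards [hinterp] with ω hω
    have hresidual : X *ᵥ (what ω - wstar) = ε ω := by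
      rw [mulVec_sub, hω, hy, add_sub_cancel_left]
    simpa [hresidual] using
      X.sum_sq_mulVec_le hn' hherm (fun i => hγmax.2 ⟨i, rfl⟩) (what ω - wstar)
  have hnoise : ∫ ω, ∑ i, ε ω i ^ 2 ∂μ = n * σ2 := by
    rw [integral_finsetSum _ fun i _ => (hεL2 i).integrable_sq]
    simp [sq, hcov]
  have herror : Integrable (fun ω => ∑ j, (what ω j - wstar j) ^ 2) μ :=
    integrable_finsetSum _ fun j _ => ((hwL2 j).sub (memLp_const (wstar j))).integrable_sq
  have hmono : n * σ2 ≤ n * γmax * ∫ ω, ∑ j, (what ω j - wstar j) ^ 2 ∂μ := by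
    rw [← hnoise, ← integral_const_mul]
    exact integral_mono_ae (integrable_finsetSum _ fun i _ => (hεL2 i).integrable_sq)
      (herror.const_mul _) hpointwise
  rw [ge_iff_le, div_le_iff₀ hγpos, mul_comm]
  exact le_of_mul_le_mul_left (by rwa [mul_assoc] at hmono) hn'

/-- **Lower bound for the minimum norm estimator.**
In fixed-design linear regression with `rank X = n < p`, if `γmax > 0` is the
largest eigenvalue of `Σ = XᵀX/n`, then any square-integrable estimator `what`
interpolating the data almost surely (in particular the minimum norm estimator)
satisfies `E‖ŵ − w*‖² ≥ σ²/γmax`. -/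
theorem min_norm_lower_bound
    {Ω : Type} [MeasurableSpace Ω] (μ : Measure Ω) [IsProbabilityMeasure μ]
    (n p : ℕ) (hn : 0 < n) (hnp : n < p)
    (X : Matrix (Fin n) (Fin p) ℝ) (hrank : X.rank = n)
    (hherm : (((n : ℝ)⁻¹ • (Xᵀ * X)) : Matrix (Fin p) (Fin p) ℝ).IsHermitian)
    (γmax : ℝ) (hγmax : IsGreatest (Set.range hherm.eigenvalues) γmax)
    (hγpos : 0 < γmax)
    (wstar : Fin p → ℝ)
    (σ2 : ℝ) (hσ2 : 0 < σ2)
    (ε : Ω → Fin n → ℝ)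
    (hεL2 : ∀ i, MemLp (fun ω => ε ω i) 2 μ)
    (hmean : ∀ i, ∫ ω, ε ω i ∂μ = 0)
    (hcov : ∀ i i', ∫ ω, ε ω i * ε ω i' ∂μ = if i = i' then σ2 else 0)
    (y : Ω → Fin n → ℝ) (hy : ∀ ω, y ω = X *ᵥ wstar + ε ω)
    (what : Ω → Fin p → ℝ)
    (hwL2 : ∀ j, MemLp (fun ω => what ω j) 2 μ)
    (hinterp : ∀ᵐ ω ∂μ, X *ᵥ what ω = y ω) :
    ∫ ω, ∑ j, (what ω j - wstar j) ^ 2 ∂μ ≥ σ2 / γmax :=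
  min_norm_lower_bound_general μ n p hn X hherm γmax hγmax hγpos wstar σ2 ε hεL2 hcov y hy what hwL2
    hinterp
end

section
/- (One-step projected-error recursion for generalized ℓ₂-regularization.) Fix a task t with Σ_t = U Γ_t Uᵀ, where U is orthogonal with columns u_1,…,u_p and Γ_t = diag(γ_1^{(t)},…,γ_p^{(t)}), γ_j^{(t)} ≥ 0. Let H_t = U Λ_t Uᵀ with Λ_t = diag(λ_1^{(t)},…,λ_p^{(t)}) and λ_j^{(t)} + γ_j^{(t)} > 0 for every j. Let v be a square-integrable random vector in ℝ^p independent of ε_t, and let ŵ be the minimizer of w ↦ (1/n_t)‖X_t w − y_t‖² + (w − v)ᵀ H_t (w − v). Then for every j ∈ [p], writing e_prev := E[(u_jᵀ(v − w*))²], one has E[(u_jᵀ(ŵ − w*))²] = e_prev − 2 γ_j^{(t)} e_prev / (λ_j^{(t)} + γ_j^{(t)}) + ( (γ_j^{(t)})² e_prev + γ_j^{(t)} σ²/n_t ) / (λ_j^{(t)} + γ_j^{(t)})². -/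
/-!
Since `Σ_t` and `H_t` share the eigenvector `u_j`, the first-order condition of the objective at
`ŵ` in direction `u_j` decouples:
`(λ_j + γ_j) u_jᵀ(ŵ - w*) = λ_j u_jᵀ(v - w*) + u_jᵀ Xᵀ ε / n`.
The two summands on the right are uncorrelated, because `v` is independent of the centred noise,
and the second one has second moment `σ² ‖X u_j‖² / n² = γ_j σ² / n`. Squaring and integrating gives
`E[(u_jᵀ(ŵ - w*))²] = (λ_j² e_prev + γ_j σ² / n) / (λ_j + γ_j)²`, which is the claimed expression.
-/

open MeasureTheory Matrix ProbabilityTheory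

lemma eq_zero_of_forall_nonneg_mul_sq_add_mul {a b : ℝ} (h : ∀ c, 0 ≤ a * c ^ 2 + b * c) :
    b = 0 := by
  by_contra hb
  -- test at `c = -t b` with `a t < 1`
  set t := 1 / (|a| + 1) with ht
  have ht0 : 0 < t := by positivity
  have hat : a * t < 1 := by
    rw [ht, mul_one_div, div_lt_one (by positivity)]
    linarith [le_abs_self a]
  have htest := h (-(t * b))
  have hb2 : 0 < b ^ 2 := by positivity
  nlinarith [mul_pos ht0 hb2]

lemma sum_sq_add_smul {m : Type*} [Fintype m] (r d : m → ℝ) (c : ℝ) :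
    ∑ i, (r + c • d) i ^ 2 = ∑ i, r i ^ 2 + 2 * (r ⬝ᵥ d) * c + (d ⬝ᵥ d) * c ^ 2 := by
  simp only [dotProduct, Finset.mul_sum, Finset.sum_mul, Pi.add_apply, Pi.smul_apply, smul_eq_mul]
  rw [← Finset.sum_add_distrib, ← Finset.sum_add_distrib]
  exact Finset.sum_congr rfl fun i _ => by ring

namespace Matrix

variable {m ι : Type*} [Fintype m] [Fintype ι]

lemma IsSymm.dotProduct_add_smul_mulVec {H : Matrix ι ι ℝ} (hH : H.IsSymm) (a u : ι → ℝ)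
    (c : ℝ) : (a + c • u) ⬝ᵥ (H *ᵥ (a + c • u))
      = a ⬝ᵥ (H *ᵥ a) + 2 * (u ⬝ᵥ (H *ᵥ a)) * c + (u ⬝ᵥ (H *ᵥ u)) * c ^ 2 := by
  have hswap : a ⬝ᵥ (H *ᵥ u) = u ⬝ᵥ (H *ᵥ a) := by
    rw [dotProduct_mulVec, ← mulVec_transpose, hH.eq, dotProduct_comm]
  simp only [mulVec_add, mulVec_smul, dotProduct_add, add_dotProduct, dotProduct_smul,
    smul_dotProduct, smul_eq_mul, hswap]
  ring

/-- The conclusion is half the derivative of the objective at its minimizer `x` in direction `u`. -/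
lemma dotProduct_eq_zero_of_isMin_sum_sq_add_quadratic {s : ℝ} {A : Matrix m ι ℝ} {b : m → ℝ}
    {H : Matrix ι ι ℝ} (hH : H.IsSymm) {v x : ι → ℝ}
    (hmin : ∀ w, s * ∑ i, (A *ᵥ x - b) i ^ 2 + (x - v) ⬝ᵥ (H *ᵥ (x - v))
      ≤ s * ∑ i, (A *ᵥ w - b) i ^ 2 + (w - v) ⬝ᵥ (H *ᵥ (w - v))) (u : ι → ℝ) :
    s * ((A *ᵥ x - b) ⬝ᵥ (A *ᵥ u)) + u ⬝ᵥ (H *ᵥ (x - v)) = 0 := by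
  have hquad : ∀ c : ℝ, 0 ≤ (s * ((A *ᵥ u) ⬝ᵥ (A *ᵥ u)) + u ⬝ᵥ (H *ᵥ u)) * c ^ 2
      + 2 * (s * ((A *ᵥ x - b) ⬝ᵥ (A *ᵥ u)) + u ⬝ᵥ (H *ᵥ (x - v))) * c := by
    intro c
    have h := hmin (x + c • u)
    rw [show A *ᵥ (x + c • u) - b = (A *ᵥ x - b) + c • A *ᵥ u by
        rw [mulVec_add, mulVec_smul]; abel,
      show x + c • u - v = (x - v) + c • u by abel,
      sum_sq_add_smul, hH.dotProduct_add_smul_mulVec] at h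
    linarith
  have hlin := eq_zero_of_forall_nonneg_mul_sq_add_mul hquad
  linarith

section Spectral

variable {R : Type*} [CommSemiring R] [DecidableEq ι]

lemma isSymm_mul_diagonal_mul_transpose (U : Matrix ι ι R) (d : ι → R) :
    (U * diagonal d * Uᵀ).IsSymm := by
  simp only [IsSymm, transpose_mul, transpose_transpose, diagonal_transpose, Matrix.mul_assoc]

lemma col_dotProduct_col_self {U : Matrix ι ι R} (hU : Uᵀ * U = 1) (j : ι) :
    U.col j ⬝ᵥ U.col j = 1 := by
  have h := congr_fun₂ hU j j
  rwa [mul_apply', one_apply_eq] at h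

lemma mul_diagonal_mul_transpose_mulVec_col {U : Matrix ι ι R} (hU : Uᵀ * U = 1)
    (d : ι → R) (j : ι) : (U * diagonal d * Uᵀ) *ᵥ U.col j = d j • U.col j := by
  rw [← mulVec_single_one, mulVec_mulVec, Matrix.mul_assoc _ Uᵀ, hU, Matrix.mul_one,
    ← mulVec_mulVec, diagonal_mulVec_single, ← mulVec_smul, ← Pi.single_smul, smul_eq_mul, mul_one]

lemma col_dotProduct_mul_diagonal_mul_transpose_mulVec {U : Matrix ι ι R} (hU : Uᵀ * U = 1)
    (d : ι → R) (j : ι) (w : ι → R) :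
    U.col j ⬝ᵥ ((U * diagonal d * Uᵀ) *ᵥ w) = d j * (U.col j ⬝ᵥ w) := by
  rw [dotProduct_mulVec, ← (isSymm_mul_diagonal_mul_transpose U d).eq, vecMul_transpose,
    mul_diagonal_mul_transpose_mulVec_col hU, smul_dotProduct, smul_eq_mul]

end Spectral

section Gram

variable [DecidableEq ι] {s : ℝ} {X : Matrix m ι ℝ} {U : Matrix ι ι ℝ} {γ : ι → ℝ}

lemma mul_mulVec_dotProduct_mulVec_col (hU : Uᵀ * U = 1)
    (hgram : s • (Xᵀ * X) = U * diagonal γ * Uᵀ) (a : ι → ℝ) (j : ι) :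
    s * ((X *ᵥ a) ⬝ᵥ (X *ᵥ U.col j)) = γ j * (U.col j ⬝ᵥ a) := by
  rw [← vecMul_transpose X a, ← dotProduct_mulVec, mulVec_mulVec, ← smul_eq_mul,
    ← dotProduct_smul, ← smul_mulVec, hgram, mul_diagonal_mul_transpose_mulVec_col hU,
    dotProduct_smul, smul_eq_mul, dotProduct_comm]

lemma smul_mulVec_col_dotProduct_self (hU : Uᵀ * U = 1)
    (hgram : s • (Xᵀ * X) = U * diagonal γ * Uᵀ) (j : ι) :
    (s • (X *ᵥ U.col j)) ⬝ᵥ (s • (X *ᵥ U.col j)) = s * γ j := by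
  rw [smul_dotProduct, dotProduct_smul, smul_eq_mul, smul_eq_mul,
    mul_mulVec_dotProduct_mulVec_col hU hgram, col_dotProduct_col_self hU, mul_one]

lemma col_dotProduct_sub_eq_of_isMin {lam : ι → ℝ} (hU : Uᵀ * U = 1)
    (hgram : s • (Xᵀ * X) = U * diagonal γ * Uᵀ) {wstar v x : ι → ℝ} {e : m → ℝ}
    (hmin : ∀ w, s * ∑ i, (X *ᵥ x - (X *ᵥ wstar + e)) i ^ 2
          + (x - v) ⬝ᵥ ((U * diagonal lam * Uᵀ) *ᵥ (x - v))
        ≤ s * ∑ i, (X *ᵥ w - (X *ᵥ wstar + e)) i ^ 2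
          + (w - v) ⬝ᵥ ((U * diagonal lam * Uᵀ) *ᵥ (w - v))) (j : ι) :
    (lam j + γ j) * (U.col j ⬝ᵥ (x - wstar))
      = lam j * (U.col j ⬝ᵥ (v - wstar)) + (s • (X *ᵥ U.col j)) ⬝ᵥ e := by
  have hstat := dotProduct_eq_zero_of_isMin_sum_sq_add_quadratic
    (isSymm_mul_diagonal_mul_transpose U lam) hmin (U.col j)
  rw [col_dotProduct_mul_diagonal_mul_transpose_mulVec hU,
    show X *ᵥ x - (X *ᵥ wstar + e) = X *ᵥ (x - wstar) - e by rw [mulVec_sub]; abel,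
    sub_dotProduct, mul_sub, mul_mulVec_dotProduct_mulVec_col hU hgram,
    show x - v = (x - wstar) - (v - wstar) by abel, dotProduct_sub (U.col j) (x - wstar),
    dotProduct_comm e] at hstat
  rw [smul_dotProduct, smul_eq_mul]
  linarith

end Gram

end Matrix

section Noise

variable {Ω ι : Type*} [MeasurableSpace Ω] {μ : Measure Ω} [Fintype ι] {ε : Ω → ι → ℝ}

lemma memLp_dotProduct {q : ENNReal} (hε : ∀ i, MemLp (fun ω => ε ω i) q μ) (a : ι → ℝ) :
    MemLp (fun ω => a ⬝ᵥ ε ω) q μ := by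
  simpa only [dotProduct, Finset.sum_fn] using
    memLp_finsetSum' Finset.univ fun i _ => (hε i).const_mul (a i)

lemma integral_dotProduct_eq_zero (hε : ∀ i, Integrable (fun ω => ε ω i) μ)
    (hmean : ∀ i, ∫ ω, ε ω i ∂μ = 0) (a : ι → ℝ) : ∫ ω, a ⬝ᵥ ε ω ∂μ = 0 := by
  simp only [dotProduct]
  rw [integral_finsetSum _ fun i _ => (hε i).const_mul (a i)]
  simp only [integral_const_mul, hmean, mul_zero, Finset.sum_const_zero]

lemma integral_dotProduct_sq [DecidableEq ι] {σ2 : ℝ} (hε : ∀ i, MemLp (fun ω => ε ω i) 2 μ)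
    (hcov : ∀ i i', ∫ ω, ε ω i * ε ω i' ∂μ = if i = i' then σ2 else 0) (a : ι → ℝ) :
    ∫ ω, (a ⬝ᵥ ε ω) ^ 2 ∂μ = σ2 * (a ⬝ᵥ a) := by
  have hint : ∀ i i', Integrable (fun ω => a i * a i' * (ε ω i * ε ω i')) μ := fun i i' =>
    ((hε i).integrable_mul (hε i')).const_mul _
  have hexpand : ∀ ω, (a ⬝ᵥ ε ω) ^ 2 = ∑ i, ∑ i', a i * a i' * (ε ω i * ε ω i') := fun ω => by
    simp only [dotProduct, sq, Finset.sum_mul_sum]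
    exact Finset.sum_congr rfl fun i _ => Finset.sum_congr rfl fun i' _ => by ring
  simp only [hexpand]
  rw [integral_finsetSum _ fun i _ => integrable_finsetSum _ fun i' _ => hint i i']
  simp only [integral_finsetSum _ fun i' _ => hint _ i', integral_const_mul, hcov, mul_ite,
    mul_zero, Finset.sum_ite_eq, Finset.mem_univ, if_true, dotProduct, Finset.mul_sum]
  exact Finset.sum_congr rfl fun i _ => by ring

lemma integral_mul_add_sq_of_integral_mul_eq_zero {S E : Ω → ℝ} (hS : MemLp S 2 μ)
    (hE : MemLp E 2 μ) (horth : ∫ ω, S ω * E ω ∂μ = 0) (a : ℝ) :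
    ∫ ω, (a * S ω + E ω) ^ 2 ∂μ = a ^ 2 * ∫ ω, S ω ^ 2 ∂μ + ∫ ω, E ω ^ 2 ∂μ := by
  have hexpand : ∀ ω, (a * S ω + E ω) ^ 2 = a ^ 2 * S ω ^ 2 + 2 * a * (S ω * E ω) + E ω ^ 2 :=
    fun ω => by ring
  have hSS : Integrable (fun ω => a ^ 2 * S ω ^ 2) μ := hS.integrable_sq.const_mul _
  have hSE : Integrable (fun ω => 2 * a * (S ω * E ω)) μ := (hS.integrable_mul hE).const_mul _
  have hSSE : Integrable (fun ω => a ^ 2 * S ω ^ 2 + 2 * a * (S ω * E ω)) μ := hSS.add hSE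
  simp only [hexpand]
  rw [integral_add hSSE hE.integrable_sq, integral_add hSS hSE, integral_const_mul,
    integral_const_mul, horth, mul_zero, add_zero]

end Noise

theorem one_step_projected_error_recursion_general
    {Ω : Type} [MeasurableSpace Ω] (μ : Measure Ω) [IsProbabilityMeasure μ]
    (n p : ℕ)
    (X : Matrix (Fin n) (Fin p) ℝ)
    (U : Matrix (Fin p) (Fin p) ℝ) (hU : Uᵀ * U = 1)
    (γ : Fin p → ℝ)
    (hSig : (n : ℝ)⁻¹ • (Xᵀ * X) = U * Matrix.diagonal γ * Uᵀ)
    (lam : Fin p → ℝ) (hlamγ : ∀ j, 0 < lam j + γ j)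
    (wstar : Fin p → ℝ)
    (σ2 : ℝ)
    (ε : Ω → Fin n → ℝ)
    (hεL2 : ∀ i, MemLp (fun ω => ε ω i) 2 μ)
    (hmean : ∀ i, ∫ ω, ε ω i ∂μ = 0)
    (hcov : ∀ i i', ∫ ω, ε ω i * ε ω i' ∂μ = if i = i' then σ2 else 0)
    (v : Ω → Fin p → ℝ)
    (hvL2 : ∀ j, MemLp (fun ω => v ω j) 2 μ)
    (hindep : IndepFun v ε μ)
    (what : Ω → Fin p → ℝ)
    -- `what ω` minimizes the generalized ℓ₂-regularized objective centered at `v ω`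
    (hmin : ∀ ω w, (n : ℝ)⁻¹ * ∑ i, (X *ᵥ what ω - (X *ᵥ wstar + ε ω)) i ^ 2
          + (what ω - v ω) ⬝ᵥ ((U * Matrix.diagonal lam * Uᵀ) *ᵥ (what ω - v ω))
        ≤ (n : ℝ)⁻¹ * ∑ i, (X *ᵥ w - (X *ᵥ wstar + ε ω)) i ^ 2
          + (w - v ω) ⬝ᵥ ((U * Matrix.diagonal lam * Uᵀ) *ᵥ (w - v ω))) :
    ∀ j, ∫ ω, (∑ k, U k j * (what ω k - wstar k)) ^ 2 ∂μ
      = (∫ ω, (∑ k, U k j * (v ω k - wstar k)) ^ 2 ∂μ)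
        - 2 * γ j * (∫ ω, (∑ k, U k j * (v ω k - wstar k)) ^ 2 ∂μ) / (lam j + γ j)
        + ((γ j) ^ 2 * (∫ ω, (∑ k, U k j * (v ω k - wstar k)) ^ 2 ∂μ)
            + γ j * σ2 / n) / (lam j + γ j) ^ 2 := by
  intro j
  set u := U.col j
  set b := (n : ℝ)⁻¹ • (X *ᵥ u)
  set S : Ω → ℝ := fun ω => u ⬝ᵥ (v ω - wstar)
  set E : Ω → ℝ := fun ω => b ⬝ᵥ ε ω
  have hproj : ∀ ω, u ⬝ᵥ (what ω - wstar) = (lam j * S ω + E ω) / (lam j + γ j) := fun ω =>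
    eq_div_of_mul_eq (hlamγ j).ne'
      ((mul_comm _ _).trans (col_dotProduct_sub_eq_of_isMin hU hSig (hmin ω) j))
  have hS : MemLp S 2 μ :=
    memLp_dotProduct (ε := fun ω => v ω - wstar) (fun k => (hvL2 k).sub (memLp_const _)) u
  have hE : MemLp E 2 μ := memLp_dotProduct hεL2 b
  have hSE : ∫ ω, S ω * E ω ∂μ = 0 := by
    have hind : IndepFun S E μ :=
      hindep.comp (φ := fun x => u ⬝ᵥ (x - wstar)) (ψ := fun y => b ⬝ᵥ y) (by fun_prop)
        (by fun_prop)
    rw [hind.integral_fun_mul_eq_mul_integral hS.1 hE.1,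
      integral_dotProduct_eq_zero (fun i => (hεL2 i).integrable one_le_two) hmean, mul_zero]
  have hEE : ∫ ω, E ω ^ 2 ∂μ = γ j * σ2 / n := by
    rw [integral_dotProduct_sq hεL2 hcov, smul_mulVec_col_dotProduct_self hU hSig]
    ring
  have hrecursion : ∀ e : ℝ, (lam j ^ 2 * e + γ j * σ2 / n) / (lam j + γ j) ^ 2
      = e - 2 * γ j * e / (lam j + γ j) + (γ j ^ 2 * e + γ j * σ2 / n) / (lam j + γ j) ^ 2 := by
    intro e
    field_simp [(hlamγ j).ne']
    ring
  calc ∫ ω, (u ⬝ᵥ (what ω - wstar)) ^ 2 ∂μ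
      = (∫ ω, (lam j * S ω + E ω) ^ 2 ∂μ) / (lam j + γ j) ^ 2 := by
        simp only [hproj, div_pow, integral_div]
    _ = (lam j ^ 2 * ∫ ω, S ω ^ 2 ∂μ + γ j * σ2 / n) / (lam j + γ j) ^ 2 := by
        rw [integral_mul_add_sq_of_integral_mul_eq_zero hS hE hSE, hEE]
    _ = _ := hrecursion _

/-- **One-step projected-error recursion for generalized
ℓ₂-regularization.** With `Σ_t = U Γ_t Uᵀ`, `H_t = U Λ_t Uᵀ`,
`λ_j + γ_j > 0`, and previous estimate `v` independent of the noise, the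
generalized ℓ₂-regularized update `ŵ` satisfies, for every `j`, with
`e_prev = E[(u_jᵀ(v−w*))²]`:
`E[(u_jᵀ(ŵ−w*))²] = e_prev − 2 γ_j e_prev/(λ_j+γ_j)
   + (γ_j² e_prev + γ_j σ²/n)/(λ_j+γ_j)²`. -/
theorem one_step_projected_error_recursion
    {Ω : Type} [MeasurableSpace Ω] (μ : Measure Ω) [IsProbabilityMeasure μ]
    (n p : ℕ) (hn : 0 < n)
    (X : Matrix (Fin n) (Fin p) ℝ)
    (U : Matrix (Fin p) (Fin p) ℝ) (hU : Uᵀ * U = 1)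
    (γ : Fin p → ℝ) (hγ : ∀ j, 0 ≤ γ j)
    (hSig : (n : ℝ)⁻¹ • (Xᵀ * X) = U * Matrix.diagonal γ * Uᵀ)
    (lam : Fin p → ℝ) (hlamγ : ∀ j, 0 < lam j + γ j)
    (wstar : Fin p → ℝ)
    (σ2 : ℝ) (hσ2 : 0 < σ2)
    (ε : Ω → Fin n → ℝ)
    (hεL2 : ∀ i, MemLp (fun ω => ε ω i) 2 μ)
    (hmean : ∀ i, ∫ ω, ε ω i ∂μ = 0)
    (hcov : ∀ i i', ∫ ω, ε ω i * ε ω i' ∂μ = if i = i' then σ2 else 0)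
    (v : Ω → Fin p → ℝ)
    (hvL2 : ∀ j, MemLp (fun ω => v ω j) 2 μ)
    (hindep : IndepFun v ε μ)
    (what : Ω → Fin p → ℝ)
    (hwL2 : ∀ j, MemLp (fun ω => what ω j) 2 μ)
    -- `what ω` minimizes the generalized ℓ₂-regularized objective centered at `v ω`
    (hmin : ∀ ω w, (n : ℝ)⁻¹ * ∑ i, (X *ᵥ what ω - (X *ᵥ wstar + ε ω)) i ^ 2
          + (what ω - v ω) ⬝ᵥ ((U * Matrix.diagonal lam * Uᵀ) *ᵥ (what ω - v ω))
        ≤ (n : ℝ)⁻¹ * ∑ i, (X *ᵥ w - (X *ᵥ wstar + ε ω)) i ^ 2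
          + (w - v ω) ⬝ᵥ ((U * Matrix.diagonal lam * Uᵀ) *ᵥ (w - v ω))) :
    ∀ j, ∫ ω, (∑ k, U k j * (what ω k - wstar k)) ^ 2 ∂μ
      = (∫ ω, (∑ k, U k j * (v ω k - wstar k)) ^ 2 ∂μ)
        - 2 * γ j * (∫ ω, (∑ k, U k j * (v ω k - wstar k)) ^ 2 ∂μ) / (lam j + γ j)
        + ((γ j) ^ 2 * (∫ ω, (∑ k, U k j * (v ω k - wstar k)) ^ 2 ∂μ)
            + γ j * σ2 / n) / (lam j + γ j) ^ 2 :=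
  one_step_projected_error_recursion_general μ n p X U hU γ hSig lam hlamγ wstar σ2 ε hεL2 hmean
    hcov v hvL2 hindep what hmin
end

section
/- (Key inequality for robustness to approximate weights, Theorem 4.3.) For all real numbers C > 1, ρ > 0, and x with x² ≤ C (C−1) ρ² / ( (1+ρ)(1+Cρ)² ), one has C/(1+Cρ) + x² (C + 1/ρ) ≤ C/(1+ρ). -/
/-! The threshold on `x²` is chosen so that equality holds at the boundary: since
`C + 1/ρ = (1 + Cρ)/ρ`, the threshold times `C + 1/ρ` is `C(C−1)ρ / ((1+ρ)(1+Cρ))`, which is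
exactly the gap `C/(1+ρ) − C/(1+Cρ)`. -/

lemma div_add_threshold_mul_eq {C ρ : ℝ} (hρ : ρ ≠ 0) (h₁ : 1 + ρ ≠ 0) (h₂ : 1 + C * ρ ≠ 0) :
    C / (1 + C * ρ) + C * (C - 1) * ρ ^ 2 / ((1 + ρ) * (1 + C * ρ) ^ 2) * (C + 1 / ρ) =
      C / (1 + ρ) := by
  field_simp
  ring

/-- **Key inequality for robustness to approximate weights,
Theorem 4.3.** For all reals `C > 1`, `ρ > 0`, and `x` with
`x² ≤ C(C−1)ρ² / ((1+ρ)(1+Cρ)²)`, one has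
`C/(1+Cρ) + x²(C + 1/ρ) ≤ C/(1+ρ)`. -/
theorem approx_weights_key_inequality
    (C ρ x : ℝ) (hC : 1 < C) (hρ : 0 < ρ)
    (hx : x ^ 2 ≤ C * (C - 1) * ρ ^ 2 / ((1 + ρ) * (1 + C * ρ) ^ 2)) :
    C / (1 + C * ρ) + x ^ 2 * (C + 1 / ρ) ≤ C / (1 + ρ) := by
  calc C / (1 + C * ρ) + x ^ 2 * (C + 1 / ρ)
      ≤ C / (1 + C * ρ) + C * (C - 1) * ρ ^ 2 / ((1 + ρ) * (1 + C * ρ) ^ 2) * (C + 1 / ρ) := by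
        gcongr
    _ = C / (1 + ρ) := div_add_threshold_mul_eq hρ.ne' (by positivity) (by positivity)
end

section
/- (One-step robustness of the error recursion to approximate regularization, Theorem 4.3.) Let e, γ, n, σ², D be positive reals and C > 1 with e ≤ C σ² / D. Set ρ := γ n / D, and let Δ ∈ ℝ satisfy (γ Δ)² ≤ C (C−1) ρ² / ( (1+ρ)(1+Cρ)² ). Define z := e/(γ e + σ²/n) + Δ. Then e − 2 γ e z + (γ² e + γ σ²/n) z² ≤ C σ² / (D + γ n). (Interpretation: if the previous projected estimation error is at most Cσ²/D and the regularization strength λ̃ satisfies 1/(λ̃ + γ) = e/(γe + σ²/n) + Δ, then the updated projected error of the generalized ℓ₂-regularized estimator is at most Cσ²/(D + γn).) -/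
/-!
Writing `s = σ²/n` and `A = γe + s`, the updated error is the quadratic
`q(z) = e − 2γez + γAz²`, whose vertex is `z = e/A` with value `es/A`; hence
`q(e/A + Δ) = es/A + γAΔ²`. Both terms increase with `e`, so it suffices to take
`e = Cσ²/D`, where the admissible bound on `(γΔ)²` is exactly the one for which
the sum collapses to `Cσ²/(D + γn)`.
-/

theorem quadratic_step_eq_vertex_add_sq (γ e s Δ : ℝ) (h : γ * e + s ≠ 0) :
    e - 2 * γ * e * (e / (γ * e + s) + Δ) + (γ ^ 2 * e + γ * s) * (e / (γ * e + s) + Δ) ^ 2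
      = e * s / (γ * e + s) + γ * (γ * e + s) * Δ ^ 2 := by
  generalize hA : γ * e + s = A at *
  obtain rfl : s = A - γ * e := by linarith
  field_simp
  ring

theorem vertex_add_sq_le_of_le {γ e E s : ℝ} (Δ : ℝ) (hγ : 0 ≤ γ) (hs : 0 < s)
    (he : 0 ≤ e) (heE : e ≤ E) :
    e * s / (γ * e + s) + γ * (γ * e + s) * Δ ^ 2
      ≤ E * s / (γ * E + s) + γ * (γ * E + s) * Δ ^ 2 := by
  have hA : 0 < γ * e + s := by positivity
  have hAE : γ * e + s ≤ γ * E + s := by gcongr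
  refine add_le_add ?_ (by gcongr)
  rw [div_le_div_iff₀ hA (hA.trans_le hAE)]
  nlinarith [mul_le_mul_of_nonneg_right heE (sq_nonneg s)]

theorem worst_case_error_eq {γ n D C : ℝ} (σ2 : ℝ) (hγ : 0 < γ) (hn : 0 < n) (hD : 0 < D)
    (hC : 0 < C) :
    C * σ2 / D * (σ2 / n) / (γ * (C * σ2 / D) + σ2 / n)
        + (γ * (C * σ2 / D) + σ2 / n) / γ
          * (C * (C - 1) * (γ * n / D) ^ 2 / ((1 + γ * n / D) * (1 + C * (γ * n / D)) ^ 2))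
      = C * σ2 / (D + γ * n) := by
  have hCρ : 0 < 1 + C * (γ * n / D) := by positivity
  field_simp
  ring

theorem approx_regularization_one_step_general
    (e γ n σ2 D C : ℝ)
    (he : 0 < e) (hγ : 0 < γ) (hn : 0 < n) (hσ2 : 0 < σ2) (hD : 0 < D)
    (hbound : e ≤ C * σ2 / D)
    (Δ : ℝ)
    (hΔ : (γ * Δ) ^ 2
      ≤ C * (C - 1) * (γ * n / D) ^ 2
          / ((1 + γ * n / D) * (1 + C * (γ * n / D)) ^ 2)) :
    e - 2 * γ * e * (e / (γ * e + σ2 / n) + Δ)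
        + (γ ^ 2 * e + γ * σ2 / n) * (e / (γ * e + σ2 / n) + Δ) ^ 2
      ≤ C * σ2 / (D + γ * n) := by
  have hs : 0 < σ2 / n := div_pos hσ2 hn
  have hC : 0 < C := by
    have : 0 < C * σ2 := (div_pos_iff_of_pos_right hD).1 (he.trans_le hbound)
    exact pos_of_mul_pos_left this hσ2.le
  set E := C * σ2 / D
  calc _ = e * (σ2 / n) / (γ * e + σ2 / n) + γ * (γ * e + σ2 / n) * Δ ^ 2 := by
        rw [mul_div_assoc γ σ2 n]
        exact quadratic_step_eq_vertex_add_sq γ e _ Δ (by positivity)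
    _ ≤ E * (σ2 / n) / (γ * E + σ2 / n) + γ * (γ * E + σ2 / n) * Δ ^ 2 :=
        vertex_add_sq_le_of_le Δ hγ.le hs he.le hbound
    _ = E * (σ2 / n) / (γ * E + σ2 / n) + (γ * E + σ2 / n) / γ * (γ * Δ) ^ 2 := by
        field_simp
    _ ≤ _ := by gcongr
    _ = C * σ2 / (D + γ * n) := worst_case_error_eq σ2 hγ hn hD hC

/-- **One-step robustness of the error recursion to approximate
regularization, Theorem 4.3.** Let `e, γ, n, σ², D > 0` and `C > 1` with
`e ≤ Cσ²/D`; set `ρ = γn/D` and let `Δ` satisfy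
`(γΔ)² ≤ C(C−1)ρ²/((1+ρ)(1+Cρ)²)`. With `z = e/(γe + σ²/n) + Δ`, the updated
projected error satisfies
`e − 2γez + (γ²e + γσ²/n) z² ≤ Cσ²/(D + γn)`. -/
theorem approx_regularization_one_step
    (e γ n σ2 D C : ℝ)
    (he : 0 < e) (hγ : 0 < γ) (hn : 0 < n) (hσ2 : 0 < σ2) (hD : 0 < D)
    (hC : 1 < C)
    (hbound : e ≤ C * σ2 / D)
    (Δ : ℝ)
    (hΔ : (γ * Δ) ^ 2
      ≤ C * (C - 1) * (γ * n / D) ^ 2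
          / ((1 + γ * n / D) * (1 + C * (γ * n / D)) ^ 2)) :
    e - 2 * γ * e * (e / (γ * e + σ2 / n) + Δ)
        + (γ ^ 2 * e + γ * σ2 / n) * (e / (γ * e + σ2 / n) + Δ) ^ 2
      ≤ C * σ2 / (D + γ * n) :=
  approx_regularization_one_step_general e γ n σ2 D C he hγ hn hσ2 hD hbound Δ hΔ
end

section
/- (Equivalence of early stopping and generalized ℓ₂-regularization, Theorem 5.1.) For each task t, suppose Σ_t = U_t Γ_t U_tᵀ with U_t orthogonal and Γ_t = diag(γ_1^{(t)},…,γ_p^{(t)}) positive definite; let A_t = U_t S_t U_tᵀ with S_t = diag(s_1^{(t)},…,s_p^{(t)}) satisfying 0 < s_j^{(t)} γ_j^{(t)} < 1, let m_t ≥ 1 be an integer, and define H_t := U_t Λ_t U_tᵀ with λ_j^{(t)} = γ_j^{(t)} (1 − s_j^{(t)} γ_j^{(t)})^{m_t} / ( 1 − (1 − s_j^{(t)} γ_j^{(t)})^{m_t} ). Define the early stopping (ES) estimator by ŵ_0^{ES} = 0 and, at task t, setting w^{(0)} = ŵ_{t−1}^{ES}, iterating w^{(τ)} = w^{(τ−1)}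 − (A_t/n_t) X_tᵀ ( X_t w^{(τ−1)} − y_t ) for τ = 1,…,m_t, and setting ŵ_t^{ES} = w^{(m_t)}. Then for every t ∈ [T], ŵ_t^{ES} = ŵ_t^{GR}, where ŵ^{GR} is the generalized ℓ₂-regularized estimator with regularization weight matrices H_t. -/
/-!
Work in the eigenbasis `Q` of the task covariance `Σ = Q diag(γ) Qᵀ`, with `b = Xᵀy / n` and
`w̄ = Σ⁻¹ b`. Gradient descent preconditioned by `Q diag(s) Qᵀ` is an affine iteration with fixed
point `w̄` and linear part `Q diag(ρ) Qᵀ`, `ρ = 1 − sγ`, so after `m` steps from `w₀` it reaches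
`ŵ = w̄ + Q diag(ρᵐ) Qᵀ (w₀ − w̄)`. The choice `λ = γρᵐ / (1 − ρᵐ)` is exactly the identity
`(γ + λ)(1 − ρᵐ) = γ`, which says that `ŵ` is a stationary point of the objective regularised by
`H = Q diag(λ) Qᵀ`. That objective is a quadratic with positive definite Hessian
`Q diag(γ + λ) Qᵀ`, so `ŵ` is its only minimiser. Both estimators start at `0`, and induction over
the tasks concludes.
-/

open Matrix

namespace Matrix

section OrthogonalConjDiagonal

variable {ι R : Type*} [Fintype ι] [DecidableEq ι] [CommRing R]

def orthogonalConjDiagonal (Q : Matrix ι ι R) (hQ : Qᵀ * Q = 1) : (ι → R) →+* Matrix ι ι R where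
  toFun d := Q * diagonal d * Qᵀ
  map_one' := by
    change Q * diagonal (fun _ => 1) * Qᵀ = 1
    rw [diagonal_one, Matrix.mul_one, mul_eq_one_comm.mp hQ]
  map_mul' d e := by
    change Q * diagonal (d * e) * Qᵀ = Q * diagonal d * Qᵀ * (Q * diagonal e * Qᵀ)
    simp only [Matrix.mul_assoc]
    rw [← Matrix.mul_assoc Qᵀ, hQ, Matrix.one_mul, ← Matrix.mul_assoc (diagonal d),
      diagonal_mul_diagonal]
    rfl
  map_zero' := by
    rw [diagonal_zero', Matrix.mul_zero, Matrix.zero_mul]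
  map_add' d e := by
    change Q * diagonal (fun i => d i + e i) * Qᵀ = Q * diagonal d * Qᵀ + Q * diagonal e * Qᵀ
    rw [← diagonal_add, Matrix.mul_add, Matrix.add_mul]

@[simp]
lemma orthogonalConjDiagonal_apply (Q : Matrix ι ι R) (hQ : Qᵀ * Q = 1) (d : ι → R) :
    orthogonalConjDiagonal Q hQ d = Q * diagonal d * Qᵀ := rfl

lemma posDef_orthogonalConjDiagonal {Q : Matrix ι ι ℝ} (hQ : Qᵀ * Q = 1) {d : ι → ℝ}
    (hd : ∀ j, 0 < d j) : (orthogonalConjDiagonal Q hQ d).PosDef := by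
  have h := (PosDef.diagonal hd).mul_mul_conjTranspose_same
    (vecMul_injective_of_isUnit (IsUnit.of_mul_eq_one_right _ hQ))
  rwa [conjTranspose_eq_transpose_of_trivial] at h

theorem sub_eq_pow_mulVec_sub_of_affine_recurrence {M : Matrix ι ι R} {c w : ι → R}
    {g : ℕ → ι → R} (hg : ∀ τ, g (τ + 1) = M *ᵥ g τ + c) (hw : M *ᵥ w + c = w) (τ : ℕ) :
    g τ - w = (M ^ τ) *ᵥ (g 0 - w) := by
  induction τ with
  | zero => simp
  | succ τ ih =>
    rw [hg, pow_succ', ← mulVec_mulVec, ← ih, mulVec_sub]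
    conv_lhs => rw [← hw]
    abel

theorem orthogonalConjDiagonal_gradientDescent_stationary {K : Type*} [Field K]
    {Q : Matrix ι ι K} (hQ : Qᵀ * Q = 1) {γ s lam : ι → K} (hγ : ∀ j, γ j ≠ 0) {m : ℕ}
    (hlam : ∀ j, lam j * (1 - (1 - s j * γ j) ^ m) = γ j * (1 - s j * γ j) ^ m)
    {b : ι → K} {g : ℕ → ι → K}
    (hg : ∀ τ, g (τ + 1) = g τ - orthogonalConjDiagonal Q hQ s *ᵥ
      (orthogonalConjDiagonal Q hQ γ *ᵥ g τ - b)) :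
    orthogonalConjDiagonal Q hQ γ *ᵥ g m
      + orthogonalConjDiagonal Q hQ lam *ᵥ (g m - g 0) = b := by
  set φ := orthogonalConjDiagonal Q hQ
  set wbar := φ γ⁻¹ *ᵥ b
  have hbar : φ γ *ᵥ wbar = b := by
    rw [mulVec_mulVec, ← map_mul, show γ * γ⁻¹ = 1 from funext fun j => mul_inv_cancel₀ (hγ j),
      map_one, one_mulVec]
  have hrec : ∀ τ, g (τ + 1) = φ (1 - s * γ) *ᵥ g τ + φ s *ᵥ b := by
    intro τ
    rw [hg, map_sub, map_one, map_mul, sub_mulVec, one_mulVec, ← mulVec_mulVec, mulVec_sub]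
    abel
  have hfix : φ (1 - s * γ) *ᵥ wbar + φ s *ᵥ b = wbar := by
    rw [map_sub, map_one, map_mul, sub_mulVec, one_mulVec, ← mulVec_mulVec, hbar]
    abel
  have hgm := sub_eq_pow_mulVec_sub_of_affine_recurrence hrec hfix m
  rw [← map_pow] at hgm
  have hstep : g m - g 0 = φ ((1 - s * γ) ^ m - 1) *ᵥ (g 0 - wbar) := by
    rw [map_sub, map_one, sub_mulVec, one_mulVec, ← hgm]
    abel
  have hgm' : g m = wbar + φ ((1 - s * γ) ^ m) *ᵥ (g 0 - wbar) := by
    rw [← hgm]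
    abel
  have hzero : γ * (1 - s * γ) ^ m + lam * ((1 - s * γ) ^ m - 1) = 0 := by
    funext j
    simp only [Pi.add_apply, Pi.mul_apply, Pi.pow_apply, Pi.sub_apply, Pi.one_apply,
      Pi.zero_apply]
    linear_combination -(hlam j)
  rw [hstep, hgm', mulVec_add, hbar, mulVec_mulVec, mulVec_mulVec, ← map_mul, ← map_mul,
    add_assoc, ← add_mulVec, ← map_add, hzero, map_zero, zero_mulVec, add_zero]

end OrthogonalConjDiagonal

variable {ι κ R : Type*} [Fintype ι] [Fintype κ] [CommRing R]

lemma dotProduct_add_mulVec_add {H : Matrix ι ι R} (hH : Hᵀ = H) (u v : ι → R) :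
    (u + v) ⬝ᵥ H *ᵥ (u + v) = u ⬝ᵥ H *ᵥ u + 2 * (u ⬝ᵥ H *ᵥ v) + v ⬝ᵥ H *ᵥ v := by
  have hsymm : v ⬝ᵥ H *ᵥ u = u ⬝ᵥ H *ᵥ v := by
    rw [dotProduct_mulVec, ← mulVec_transpose, hH, dotProduct_comm]
  simp only [mulVec_add, dotProduct_add, add_dotProduct, hsymm]
  ring

lemma sum_sq_mulVec_add_sub (X : Matrix κ ι R) (y : κ → R) (w u : ι → R) :
    ∑ i, (X *ᵥ (w + u) - y) i ^ 2
      = ∑ i, (X *ᵥ w - y) i ^ 2 + 2 * (u ⬝ᵥ Xᵀ *ᵥ (X *ᵥ w - y)) + u ⬝ᵥ (Xᵀ * X) *ᵥ u := by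
  have hsq (v : κ → R) : ∑ i, v i ^ 2 = v ⬝ᵥ v := by simp [dotProduct, sq]
  have hadj (v : κ → R) (z : ι → R) : z ⬝ᵥ Xᵀ *ᵥ v = (X *ᵥ z) ⬝ᵥ v := by
    rw [mulVec_transpose, dotProduct_comm, ← dotProduct_mulVec, dotProduct_comm]
  rw [hsq, hsq, ← mulVec_mulVec, hadj, hadj, mulVec_add, add_sub_right_comm]
  simp only [add_dotProduct, dotProduct_add, dotProduct_comm (X *ᵥ u) (X *ᵥ w - y)]
  ring

lemma smul_transpose_mulVec_mulVec_sub (c : R) (X : Matrix κ ι R) (y : κ → R) (w : ι → R) :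
    c • (Xᵀ *ᵥ (X *ᵥ w - y)) = (c • (Xᵀ * X)) *ᵥ w - c • (Xᵀ *ᵥ y) := by
  rw [mulVec_sub, mulVec_mulVec, smul_sub, smul_mulVec]

end Matrix

section RegularizedLeastSquares

variable {ι : Type*} [Fintype ι] {n : ℕ}

noncomputable def regularizedLoss (X : Matrix (Fin n) ι ℝ) (y : Fin n → ℝ) (H : Matrix ι ι ℝ)
    (w₀ w : ι → ℝ) : ℝ :=
  (n : ℝ)⁻¹ * ∑ i, (X *ᵥ w - y) i ^ 2 + (w - w₀) ⬝ᵥ H *ᵥ (w - w₀)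

variable {X : Matrix (Fin n) ι ℝ} {y : Fin n → ℝ} {H : Matrix ι ι ℝ} {w₀ : ι → ℝ}

lemma regularizedLoss_add (hH : Hᵀ = H) (w u : ι → ℝ) :
    regularizedLoss X y H w₀ (w + u) = regularizedLoss X y H w₀ w
      + 2 * (u ⬝ᵥ ((n : ℝ)⁻¹ • (Xᵀ *ᵥ (X *ᵥ w - y)) + H *ᵥ (w - w₀)))
      + u ⬝ᵥ ((n : ℝ)⁻¹ • (Xᵀ * X) + H) *ᵥ u := by
  rw [regularizedLoss, regularizedLoss, sum_sq_mulVec_add_sub, add_sub_right_comm,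
    add_comm (w - w₀), dotProduct_add_mulVec_add hH]
  simp only [dotProduct_add, add_mulVec, smul_mulVec, dotProduct_smul, smul_eq_mul]
  ring

lemma eq_of_regularizedLoss_le (hpos : ((n : ℝ)⁻¹ • (Xᵀ * X) + H).PosDef) {ŵ w : ι → ℝ}
    (hŵ : (n : ℝ)⁻¹ • (Xᵀ *ᵥ (X *ᵥ ŵ - y)) + H *ᵥ (ŵ - w₀) = 0)
    (hw : regularizedLoss X y H w₀ w ≤ regularizedLoss X y H w₀ ŵ) : w = ŵ := by
  have hH : Hᵀ = H := by
    have hgram : ((n : ℝ)⁻¹ • (Xᵀ * X))ᵀ = (n : ℝ)⁻¹ • (Xᵀ * X) := by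
      rw [transpose_smul, transpose_mul, transpose_transpose]
    have h := hpos.isHermitian.eq
    rw [conjTranspose_eq_transpose_of_trivial, transpose_add, hgram] at h
    exact add_left_cancel h
  by_contra hne
  have hq := hpos.dotProduct_mulVec_pos (sub_ne_zero.mpr hne)
  have hexp := regularizedLoss_add (X := X) (y := y) (w₀ := w₀) hH ŵ (w - ŵ)
  rw [add_sub_cancel, hŵ, dotProduct_zero] at hexp
  rw [star_trivial] at hq
  linarith

end RegularizedLeastSquares

theorem gradientDescent_eq_of_isMin_regularizedLoss {ι : Type*} [Fintype ι] [DecidableEq ι]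
    {n : ℕ} {Q : Matrix ι ι ℝ} (hQ : Qᵀ * Q = 1) {X : Matrix (Fin n) ι ℝ} {y : Fin n → ℝ}
    {γ s lam : ι → ℝ} (hγ : ∀ j, 0 < γ j) (hcov : (n : ℝ)⁻¹ • (Xᵀ * X) = Q * diagonal γ * Qᵀ)
    (hs : ∀ j, 0 < s j * γ j ∧ s j * γ j < 1) {m : ℕ} (hm : 1 ≤ m)
    (hlam : ∀ j, lam j = γ j * (1 - s j * γ j) ^ m / (1 - (1 - s j * γ j) ^ m))
    {w₀ : ι → ℝ} {g : ℕ → ι → ℝ} (hg0 : g 0 = w₀)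
    (hg : ∀ τ, g (τ + 1) = g τ - (n : ℝ)⁻¹ • ((Q * diagonal s * Qᵀ) *ᵥ (Xᵀ *ᵥ (X *ᵥ g τ - y))))
    {w : ι → ℝ} (hw : ∀ w', regularizedLoss X y (Q * diagonal lam * Qᵀ) w₀ w
      ≤ regularizedLoss X y (Q * diagonal lam * Qᵀ) w₀ w') :
    g m = w := by
  set φ := orthogonalConjDiagonal Q hQ
  have hρm : ∀ j, 0 < (1 - s j * γ j) ^ m ∧ (1 - s j * γ j) ^ m < 1 := fun j =>
    ⟨pow_pos (by linarith [hs j]) m,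
      pow_lt_one₀ (by linarith [hs j]) (by linarith [hs j]) (by omega)⟩
  have hlam_mul : ∀ j, lam j * (1 - (1 - s j * γ j) ^ m) = γ j * (1 - s j * γ j) ^ m := fun j => by
    rw [hlam j, div_mul_cancel₀ _ (by linarith [hρm j])]
  have hlam_nonneg : ∀ j, 0 ≤ lam j := fun j => by
    rw [hlam j]
    exact div_nonneg (mul_pos (hγ j) (hρm j).1).le (by linarith [hρm j])
  have hpos : ((n : ℝ)⁻¹ • (Xᵀ * X) + Q * diagonal lam * Qᵀ).PosDef := by
    rw [hcov, ← orthogonalConjDiagonal_apply Q hQ, ← orthogonalConjDiagonal_apply Q hQ,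
      ← map_add]
    exact posDef_orthogonalConjDiagonal hQ fun j =>
      add_pos_of_pos_of_nonneg (hγ j) (hlam_nonneg j)
  have hg' : ∀ τ, g (τ + 1) = g τ - φ s *ᵥ (φ γ *ᵥ g τ - (n : ℝ)⁻¹ • (Xᵀ *ᵥ y)) := by
    intro τ
    rw [hg, ← mulVec_smul, smul_transpose_mulVec_mulVec_sub, hcov]
    rfl
  have hstat :=
    orthogonalConjDiagonal_gradientDescent_stationary hQ (fun j => (hγ j).ne') hlam_mul hg'
  refine (eq_of_regularizedLoss_le hpos ?_ (hw (g m))).symm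
  rw [smul_transpose_mulVec_mulVec_sub, hcov, ← hg0, sub_add_eq_add_sub, sub_eq_zero]
  exact hstat

theorem early_stopping_eq_generalized_l2_general
    (T p : ℕ)
    (n : Fin T → ℕ)
    (X : (t : Fin T) → Matrix (Fin (n t)) (Fin p) ℝ)
    (y : (t : Fin T) → Fin (n t) → ℝ)
    (U : Fin T → Matrix (Fin p) (Fin p) ℝ) (hU : ∀ t, (U t)ᵀ * U t = 1)
    (γ : Fin T → Fin p → ℝ) (hγ : ∀ t j, 0 < γ t j)
    (hSig : ∀ t, ((n t : ℝ))⁻¹ • ((X t)ᵀ * X t)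
      = U t * Matrix.diagonal (γ t) * (U t)ᵀ)
    (s : Fin T → Fin p → ℝ)
    (hs : ∀ t j, 0 < s t j * γ t j ∧ s t j * γ t j < 1)
    (m : Fin T → ℕ) (hm : ∀ t, 1 ≤ m t)
    (lam : Fin T → Fin p → ℝ)
    (hlam : ∀ t j, lam t j
      = γ t j * (1 - s t j * γ t j) ^ m t / (1 - (1 - s t j * γ t j) ^ m t))
    -- the early stopping estimator
    (wES : ℕ → Fin p → ℝ) (hES0 : wES 0 = 0)
    (gd : (t : Fin T) → ℕ → Fin p → ℝ)
    (hgd0 : ∀ t : Fin T, gd t 0 = wES (t : ℕ))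
    (hgd : ∀ (t : Fin T) (τ : ℕ), gd t (τ + 1)
      = gd t τ - (n t : ℝ)⁻¹ • ((U t * Matrix.diagonal (s t) * (U t)ᵀ) *ᵥ
          ((X t)ᵀ *ᵥ (X t *ᵥ gd t τ - y t))))
    (hESstep : ∀ t : Fin T, wES ((t : ℕ) + 1) = gd t (m t))
    -- the generalized ℓ₂-regularized estimator
    (wGR : ℕ → Fin p → ℝ) (hGR0 : wGR 0 = 0)
    (hGR : ∀ (t : Fin T) (w : Fin p → ℝ),
      (n t : ℝ)⁻¹ * ∑ i, (X t *ᵥ wGR ((t : ℕ) + 1) - y t) i ^ 2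
        + (wGR ((t : ℕ) + 1) - wGR (t : ℕ)) ⬝ᵥ
            ((U t * Matrix.diagonal (lam t) * (U t)ᵀ) *ᵥ
              (wGR ((t : ℕ) + 1) - wGR (t : ℕ)))
      ≤ (n t : ℝ)⁻¹ * ∑ i, (X t *ᵥ w - y t) i ^ 2
        + (w - wGR (t : ℕ)) ⬝ᵥ
            ((U t * Matrix.diagonal (lam t) * (U t)ᵀ) *ᵥ (w - wGR (t : ℕ)))) :
    ∀ t : Fin T, wES ((t : ℕ) + 1) = wGR ((t : ℕ) + 1) := by
  have hagree : ∀ k ≤ T, wES k = wGR k := by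
    intro k
    induction k with
    | zero => intro _; rw [hES0, hGR0]
    | succ k ih =>
      intro hk
      let t : Fin T := ⟨k, hk⟩
      exact (hESstep t).trans <| gradientDescent_eq_of_isMin_regularizedLoss (hU t) (hγ t)
        (hSig t) (hs t) (hm t) (hlam t) ((hgd0 t).trans (ih (by omega))) (hgd t) (hGR t)
  exact fun t => hagree _ t.isLt

/-- **Equivalence of early stopping and generalized
ℓ₂-regularization, Theorem 5.1.** For each task `t` with
`Σ_t = U_t Γ_t U_tᵀ` (`Γ_t` positive definite diagonal),
`A_t = U_t S_t U_tᵀ` with `0 < s_j^{(t)} γ_j^{(t)} < 1`, `m_t ≥ 1`, and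
`H_t = U_t Λ_t U_tᵀ` with
`λ_j^{(t)} = γ_j^{(t)}(1 − s_j^{(t)} γ_j^{(t)})^{m_t} / (1 − (1 − s_j^{(t)} γ_j^{(t)})^{m_t})`,
the early stopping estimator coincides with the generalized ℓ₂-regularized
estimator after every task: `ŵ_t^{ES} = ŵ_t^{GR}` for all `t ∈ [T]`. -/
theorem early_stopping_eq_generalized_l2
    (T p : ℕ)
    (n : Fin T → ℕ) (hn : ∀ t, 0 < n t)
    (X : (t : Fin T) → Matrix (Fin (n t)) (Fin p) ℝ)
    (wstar : Fin p → ℝ)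
    (ε : (t : Fin T) → Fin (n t) → ℝ)
    (y : (t : Fin T) → Fin (n t) → ℝ) (hy : ∀ t, y t = X t *ᵥ wstar + ε t)
    (U : Fin T → Matrix (Fin p) (Fin p) ℝ) (hU : ∀ t, (U t)ᵀ * U t = 1)
    (γ : Fin T → Fin p → ℝ) (hγ : ∀ t j, 0 < γ t j)
    (hSig : ∀ t, ((n t : ℝ))⁻¹ • ((X t)ᵀ * X t)
      = U t * Matrix.diagonal (γ t) * (U t)ᵀ)
    (s : Fin T → Fin p → ℝ)
    (hs : ∀ t j, 0 < s t j * γ t j ∧ s t j * γ t j < 1)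
    (m : Fin T → ℕ) (hm : ∀ t, 1 ≤ m t)
    (lam : Fin T → Fin p → ℝ)
    (hlam : ∀ t j, lam t j
      = γ t j * (1 - s t j * γ t j) ^ m t / (1 - (1 - s t j * γ t j) ^ m t))
    -- the early stopping estimator
    (wES : ℕ → Fin p → ℝ) (hES0 : wES 0 = 0)
    (gd : (t : Fin T) → ℕ → Fin p → ℝ)
    (hgd0 : ∀ t : Fin T, gd t 0 = wES (t : ℕ))
    (hgd : ∀ (t : Fin T) (τ : ℕ), gd t (τ + 1)
      = gd t τ - (n t : ℝ)⁻¹ • ((U t * Matrix.diagonal (s t) * (U t)ᵀ) *ᵥ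
          ((X t)ᵀ *ᵥ (X t *ᵥ gd t τ - y t))))
    (hESstep : ∀ t : Fin T, wES ((t : ℕ) + 1) = gd t (m t))
    -- the generalized ℓ₂-regularized estimator
    (wGR : ℕ → Fin p → ℝ) (hGR0 : wGR 0 = 0)
    (hGR : ∀ (t : Fin T) (w : Fin p → ℝ),
      (n t : ℝ)⁻¹ * ∑ i, (X t *ᵥ wGR ((t : ℕ) + 1) - y t) i ^ 2
        + (wGR ((t : ℕ) + 1) - wGR (t : ℕ)) ⬝ᵥ
            ((U t * Matrix.diagonal (lam t) * (U t)ᵀ) *ᵥ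
              (wGR ((t : ℕ) + 1) - wGR (t : ℕ)))
      ≤ (n t : ℝ)⁻¹ * ∑ i, (X t *ᵥ w - y t) i ^ 2
        + (w - wGR (t : ℕ)) ⬝ᵥ
            ((U t * Matrix.diagonal (lam t) * (U t)ᵀ) *ᵥ (w - wGR (t : ℕ)))) :
    ∀ t : Fin T, wES ((t : ℕ) + 1) = wGR ((t : ℕ) + 1) :=
  early_stopping_eq_generalized_l2_general T p n X y U hU γ hγ hSig s hs m hm lam hlam wES hES0 gd
    hgd0 hgd hESstep wGR hGR0 hGR
end

section
/- (Oracle rate of early stopping, Corollary 5.2.) Under the shared assumptions with u_jᵀ w* ≠ 0 for every j ∈ [p], suppose the learning-rate matrices are A_t = U S_t Uᵀ with S_t = diag(s_1^{(t)},…,s_p^{(t)}) and integers m_t ≥ 1 satisfying (1 − s_j^{(t)} γ_j^{(t)})^{m_t} = 1 − γ_j^{(t)} n_t / ( σ²/e_j^{(0)} + γ_j^{(1)} n₁ + ⋯ + γ_j^{(t)} n_t ) for every j ∈ [p] and t ∈ [T]. Then the early stopping estimator satisfies, for every t ∈ [T], L(ŵ_t^{ES}) = ∑_{j=1}^p σ²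 / ( σ²/e_j^{(0)} + γ_j^{(1)} n₁ + ⋯ + γ_j^{(t)} n_t ). -/
open MeasureTheory Matrix ProbabilityTheory Finset

/-!
In the common eigenbasis `U` the problem decouples into `p` scalar problems. Write
`c_k = (Uᵀ (ŵ_k - w*))_j`, `ξ_t = ((X_t U)ᵀ ε_t)_j` and `D_t = σ²/e_j + ∑_{τ ≤ t} γ_τ n_τ`.
The `m_t` gradient steps of task `t` give `c_{t+1} = α c_t + β ξ_t`, and the oracle choice of
`m_t` is exactly what makes `D_t α = D_{t-1}` and `D_t β = 1` (when `γ_t = 0` there is no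
noise: the `j`-th column of `X_t U` vanishes). Telescoping,
`D_t c_{t+1} = -σ²/(u_jᵀ w*) + ∑_{τ ≤ t} ξ_τ`, a constant plus independent centred terms of
variances `σ² γ_τ n_τ`, so `E c_{t+1}² = (σ⁴/e_j + σ² ∑_{τ ≤ t} γ_τ n_τ) / D_t² = σ²/D_t`.
Orthogonality of `U` then sums the coordinates.
-/

theorem affine_recurrence_eq {R : Type*} [CommRing R] {x : ℕ → R} {a b : R}
    (h : ∀ k, x (k + 1) = a * x k + b) (k : ℕ) :
    x k = a ^ k * x 0 + (∑ i ∈ range k, a ^ i) * b := by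
  induction k with
  | zero => simp
  | succ k ih => rw [h, ih, geom_sum_succ]; ring

theorem precision_mul_affine_iterate {D c s γ b x : ℝ} {m : ℕ} (hD : D ≠ 0) (hc : c ≠ 0)
    (hsm : (1 - s * γ) ^ m = 1 - γ * c / D) (hb : γ = 0 → b = 0) :
    D * ((1 - s * γ) ^ m * x + (∑ i ∈ range m, (1 - s * γ) ^ i) * (s * c⁻¹ * b))
      = (D - γ * c) * x + b := by
  rcases eq_or_ne γ 0 with hγ | hγ
  · simp [hγ, hb hγ]
  · have hgeom : (∑ i ∈ range m, (1 - s * γ) ^ i) * s = c / D := by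
      have h := geom_sum_mul (1 - s * γ) m
      rw [hsm] at h
      apply mul_right_cancel₀ hγ
      linear_combination (-1 : ℝ) * h
    calc D * ((1 - s * γ) ^ m * x + (∑ i ∈ range m, (1 - s * γ) ^ i) * (s * c⁻¹ * b))
        = D * (1 - s * γ) ^ m * x + D * ((∑ i ∈ range m, (1 - s * γ) ^ i) * s) * c⁻¹ * b := by
          ring
      _ = (D - γ * c) * x + b := by
          rw [hsm, hgeom]
          field_simp

section Coordinates

variable {p N : ℕ} {U : Matrix (Fin p) (Fin p) ℝ} {X : Matrix (Fin N) (Fin p) ℝ}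
  {γ : Fin p → ℝ} {c : ℝ}

theorem sum_sq_transpose_mulVec (hU : U * Uᵀ = 1) (x : Fin p → ℝ) :
    ∑ j, (Uᵀ *ᵥ x) j ^ 2 = ∑ j, x j ^ 2 := by
  have h : (Uᵀ *ᵥ x) ⬝ᵥ (Uᵀ *ᵥ x) = x ⬝ᵥ x := by
    rw [dotProduct_mulVec, mulVec_transpose, vecMul_vecMul, hU, vecMul_one]
  simpa [dotProduct, sq] using h

theorem transpose_mul_gram (hU : Uᵀ * U = 1) (hc : c ≠ 0)
    (hgram : c⁻¹ • (Xᵀ * X) = U * diagonal γ * Uᵀ) :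
    Uᵀ * (Xᵀ * X) = c • (diagonal γ * Uᵀ) := by
  rw [← smul_inv_smul₀ hc (Xᵀ * X), hgram, Matrix.mul_smul, ← Matrix.mul_assoc,
    ← Matrix.mul_assoc, hU, Matrix.one_mul]

theorem sum_sq_mul_apply (hU : Uᵀ * U = 1) (hc : c ≠ 0)
    (hgram : c⁻¹ • (Xᵀ * X) = U * diagonal γ * Uᵀ) (j : Fin p) :
    ∑ i, (X * U) i j ^ 2 = c * γ j := by
  have h : (X * U)ᵀ * (X * U) = c • diagonal γ := by
    rw [transpose_mul, Matrix.mul_assoc, ← Matrix.mul_assoc Xᵀ, ← Matrix.mul_assoc,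
      transpose_mul_gram hU hc hgram, smul_mul, Matrix.mul_assoc, hU, Matrix.mul_one]
  have hjj := congrFun (congrFun h j) j
  rw [Matrix.mul_apply] at hjj
  simpa only [transpose_apply, Matrix.smul_apply, diagonal_apply_eq, smul_eq_mul, sq] using hjj

theorem transpose_mul_mulVec_apply_eq_zero (hU : Uᵀ * U = 1) (hc : c ≠ 0)
    (hgram : c⁻¹ • (Xᵀ * X) = U * diagonal γ * Uᵀ) {j : Fin p} (hγ : γ j = 0) (e : Fin N → ℝ) :
    ((X * U)ᵀ *ᵥ e) j = 0 := by
  have hcol : ∀ i, (X * U) i j = 0 := by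
    have h := sum_sq_mul_apply hU hc hgram j
    rw [hγ, mul_zero, sum_eq_zero_iff_of_nonneg fun i _ => sq_nonneg _] at h
    exact fun i => pow_eq_zero_iff two_ne_zero |>.mp (h i (mem_univ i))
  simp [mulVec, dotProduct, hcol]

theorem transpose_mulVec_gd_step (hU : Uᵀ * U = 1) (hc : c ≠ 0)
    (hgram : c⁻¹ • (Xᵀ * X) = U * diagonal γ * Uᵀ) (s : Fin p → ℝ) (w wstar : Fin p → ℝ)
    (e : Fin N → ℝ) (j : Fin p) :
    (Uᵀ *ᵥ (w - c⁻¹ • ((U * diagonal s * Uᵀ) *ᵥ (Xᵀ *ᵥ (X *ᵥ w - (X *ᵥ wstar + e)))) - wstar)) j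
      = (1 - s j * γ j) * (Uᵀ *ᵥ (w - wstar)) j + s j * c⁻¹ * ((X * U)ᵀ *ᵥ e) j := by
  have hA : Uᵀ * (U * diagonal s * Uᵀ) = diagonal s * Uᵀ := by
    rw [← Matrix.mul_assoc, ← Matrix.mul_assoc, hU, Matrix.one_mul]
  have hdiag : ∀ v, Uᵀ *ᵥ ((U * diagonal s * Uᵀ) *ᵥ v) = diagonal s *ᵥ (Uᵀ *ᵥ v) := by
    intro v
    rw [mulVec_mulVec, hA, ← mulVec_mulVec]
  have hgrad : Uᵀ *ᵥ (Xᵀ *ᵥ (X *ᵥ w - (X *ᵥ wstar + e)))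
      = c • (diagonal γ *ᵥ (Uᵀ *ᵥ (w - wstar))) - (X * U)ᵀ *ᵥ e := by
    simp only [mulVec_sub, mulVec_add, mulVec_mulVec, transpose_mul_gram hU hc hgram,
      smul_mulVec, transpose_mul, smul_sub]
    abel
  have hvec : Uᵀ *ᵥ (w - c⁻¹ • ((U * diagonal s * Uᵀ) *ᵥ (Xᵀ *ᵥ (X *ᵥ w - (X *ᵥ wstar + e))))
      - wstar) = Uᵀ *ᵥ (w - wstar) - c⁻¹ • (diagonal s *ᵥ
        (c • (diagonal γ *ᵥ (Uᵀ *ᵥ (w - wstar))) - (X * U)ᵀ *ᵥ e)) := by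
    rw [sub_right_comm, mulVec_sub, mulVec_smul, hdiag, hgrad]
  rw [hvec]
  simp only [Pi.sub_apply, Pi.smul_apply, mulVec_diagonal, smul_eq_mul]
  field_simp
  ring

theorem precision_mul_transpose_mulVec_gd_iterate (hU : Uᵀ * U = 1) (hc : c ≠ 0)
    (hgram : c⁻¹ • (Xᵀ * X) = U * diagonal γ * Uᵀ) {s wstar : Fin p → ℝ} {e : Fin N → ℝ}
    {g : ℕ → Fin p → ℝ}
    (hg : ∀ k, g (k + 1) = g k - c⁻¹ • ((U * diagonal s * Uᵀ) *ᵥ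
      (Xᵀ *ᵥ (X *ᵥ g k - (X *ᵥ wstar + e)))))
    {m : ℕ} {D : ℝ} (hD : D ≠ 0) {j : Fin p} (hsm : (1 - s j * γ j) ^ m = 1 - γ j * c / D) :
    D * (Uᵀ *ᵥ (g m - wstar)) j
      = (D - γ j * c) * (Uᵀ *ᵥ (g 0 - wstar)) j + ((X * U)ᵀ *ᵥ e) j := by
  have hstep (k : ℕ) : (Uᵀ *ᵥ (g (k + 1) - wstar)) j
      = (1 - s j * γ j) * (Uᵀ *ᵥ (g k - wstar)) j + s j * c⁻¹ * ((X * U)ᵀ *ᵥ e) j := by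
    rw [hg k, transpose_mulVec_gd_step hU hc hgram]
  rw [affine_recurrence_eq (x := fun k => (Uᵀ *ᵥ (g k - wstar)) j) hstep m]
  exact precision_mul_affine_iterate hD hc hsm (transpose_mul_mulVec_apply_eq_zero hU hc hgram · e)

end Coordinates

theorem weighted_telescope_Iic {T : ℕ} {P : ℝ} {a b : Fin T → ℝ} {x : ℕ → ℝ}
    (h : ∀ t : Fin T,
      (P + ∑ τ ∈ Iic t, a τ) * x (t + 1) = (P + ∑ τ ∈ Iic t, a τ - a t) * x t + b t)
    (t : Fin T) : (P + ∑ τ ∈ Iic t, a τ) * x (t + 1) = P * x 0 + ∑ τ ∈ Iic t, b τ := by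
  obtain ⟨k, hk⟩ := t
  induction k with
  | zero =>
    have hIic : Iic (⟨0, hk⟩ : Fin T) = {⟨0, hk⟩} := by
      ext τ; simp [Fin.le_def, Fin.ext_iff]
    simpa [hIic] using h ⟨0, hk⟩
  | succ k ih =>
    have hIic : Iic (⟨k + 1, hk⟩ : Fin T) = insert ⟨k + 1, hk⟩ (Iic ⟨k, by omega⟩) := by
      ext τ; simp only [mem_Iic, mem_insert, Fin.le_def, Fin.ext_iff]; omega
    have hnot : (⟨k + 1, hk⟩ : Fin T) ∉ Iic ⟨k, by omega⟩ := by simp [Fin.le_def]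
    have ih' : (P + ∑ τ ∈ Iic ⟨k, _⟩, a τ) * x (k + 1) = P * x 0 + ∑ τ ∈ Iic ⟨k, _⟩, b τ :=
      ih (by omega)
    rw [h ⟨k + 1, hk⟩, hIic, sum_insert hnot, sum_insert hnot, Fin.val_mk]
    linear_combination ih'

theorem precision_mul_transpose_mulVec_early_stopping {T p : ℕ} {N : Fin T → ℕ}
    {X : (t : Fin T) → Matrix (Fin (N t)) (Fin p) ℝ} {U : Matrix (Fin p) (Fin p) ℝ}
    {γ : Fin T → Fin p → ℝ} {c : Fin T → ℝ} (hU : Uᵀ * U = 1) (hc : ∀ t, c t ≠ 0)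
    (hgram : ∀ t, (c t)⁻¹ • ((X t)ᵀ * X t) = U * diagonal (γ t) * Uᵀ)
    {s : Fin T → Fin p → ℝ} {m : Fin T → ℕ} {wstar : Fin p → ℝ} {e : (t : Fin T) → Fin (N t) → ℝ}
    {w : ℕ → Fin p → ℝ} {g : Fin T → ℕ → Fin p → ℝ} (hg0 : ∀ t : Fin T, g t 0 = w t)
    (hg : ∀ t k, g t (k + 1) = g t k - (c t)⁻¹ • ((U * diagonal (s t) * Uᵀ) *ᵥ
      ((X t)ᵀ *ᵥ (X t *ᵥ g t k - (X t *ᵥ wstar + e t)))))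
    (hw : ∀ t : Fin T, w (t + 1) = g t (m t)) {P : ℝ} {j : Fin p}
    (hD : ∀ t, P + ∑ τ ∈ Iic t, γ τ j * c τ ≠ 0)
    (hsm : ∀ t, (1 - s t j * γ t j) ^ m t = 1 - γ t j * c t / (P + ∑ τ ∈ Iic t, γ τ j * c τ))
    (t : Fin T) :
    (P + ∑ τ ∈ Iic t, γ τ j * c τ) * (Uᵀ *ᵥ (w (t + 1) - wstar)) j
      = P * (Uᵀ *ᵥ (w 0 - wstar)) j + ∑ τ ∈ Iic t, ((X τ * U)ᵀ *ᵥ e τ) j := by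
  refine weighted_telescope_Iic (x := fun k => (Uᵀ *ᵥ (w k - wstar)) j) (fun r => ?_) t
  rw [hw, ← hg0 r]
  exact precision_mul_transpose_mulVec_gd_iterate hU (hc r) (hgram r) (hg r) (hD r) (hsm r)

section Noise
variable {Ω : Type*} [MeasurableSpace Ω] {μ : Measure Ω} [IsProbabilityMeasure μ]

theorem integral_sq_const_add_sum_of_indep {ι : Type*} {s : Finset ι} {ξ : ι → Ω → ℝ}
    (hL2 : ∀ i ∈ s, MemLp (ξ i) 2 μ) (hmean : ∀ i ∈ s, μ[ξ i] = 0)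
    (hind : Set.Pairwise ↑s fun i k => ξ i ⟂ᵢ[μ] ξ k) (c : ℝ) :
    ∫ ω, (c + ∑ i ∈ s, ξ i ω) ^ 2 ∂μ = c ^ 2 + ∑ i ∈ s, Var[ξ i; μ] := by
  have hS : MemLp (fun ω => ∑ i ∈ s, ξ i ω) 2 μ := memLp_finsetSum s hL2
  have hmeanS : ∫ ω, ∑ i ∈ s, ξ i ω ∂μ = 0 := by
    rw [integral_finsetSum s fun i hi => (hL2 i hi).integrable one_le_two]
    exact sum_eq_zero hmean
  have hZ : MemLp (fun ω => c + ∑ i ∈ s, ξ i ω) 2 μ := (memLp_const c).add hS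
  have hvar := variance_eq_sub hZ
  rw [variance_const_add hS.aestronglyMeasurable, ← Finset.sum_fn, IndepFun.variance_sum hL2 hind,
    integral_add (integrable_const c) (hS.integrable one_le_two), hmeanS] at hvar
  simp only [integral_const, probReal_univ, one_smul, add_zero, Pi.pow_apply] at hvar
  linarith

variable {ι : Type*} {σ2 : ℝ}

theorem integral_sum_mul_eq_zero [Fintype ι] {e : Ω → ι → ℝ}
    (hL2 : ∀ i, MemLp (fun ω => e ω i) 2 μ)
    (hmean : ∀ i, ∫ ω, e ω i ∂μ = 0) (a : ι → ℝ) :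
    ∫ ω, ∑ i, a i * e ω i ∂μ = 0 := by
  rw [integral_finsetSum _ fun i _ => ((hL2 i).integrable one_le_two).const_mul (a i)]
  simp [integral_const_mul, hmean]

theorem variance_sum_mul_of_cov [Fintype ι] [DecidableEq ι] {e : Ω → ι → ℝ}
    (hL2 : ∀ i, MemLp (fun ω => e ω i) 2 μ)
    (hmean : ∀ i, ∫ ω, e ω i ∂μ = 0)
    (hcov : ∀ i k, ∫ ω, e ω i * e ω k ∂μ = if i = k then σ2 else 0) (a : ι → ℝ) :
    Var[fun ω => ∑ i, a i * e ω i; μ] = σ2 * ∑ i, a i ^ 2 := by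
  rw [variance_fun_sum' fun i _ => (hL2 i).const_mul (a i), mul_sum]
  refine sum_congr rfl fun i _ => ?_
  simp_rw [covariance_const_mul_left, covariance_const_mul_right,
    covariance_eq_sub (hL2 _) (hL2 _)]
  simp [hmean, hcov, sq]
  ring

theorem memLp_const_add_sum_sum_mul {κ : ι → Type*} [∀ t, Fintype (κ t)]
    {ε : (t : ι) → Ω → κ t → ℝ} (hL2 : ∀ t i, MemLp (fun ω => ε t ω i) 2 μ)
    (a : (t : ι) → κ t → ℝ) (s : Finset ι) (c : ℝ) :
    MemLp (fun ω => c + ∑ t ∈ s, ∑ i, a t i * ε t ω i) 2 μ := by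
  have hsum : MemLp (fun ω => ∑ t ∈ s, ∑ i, a t i * ε t ω i) 2 μ :=
    memLp_finsetSum _ fun t _ => memLp_finsetSum _ fun i _ => (hL2 t i).const_mul (a t i)
  exact (memLp_const c).add hsum

theorem integral_sq_const_add_sum_noise {κ : ι → Type*} [∀ t, Fintype (κ t)]
    [∀ t, DecidableEq (κ t)] {ε : (t : ι) → Ω → κ t → ℝ}
    (hL2 : ∀ t i, MemLp (fun ω => ε t ω i) 2 μ) (hmean : ∀ t i, ∫ ω, ε t ω i ∂μ = 0)
    (hcov : ∀ t i k, ∫ ω, ε t ω i * ε t ω k ∂μ = if i = k then σ2 else 0)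
    (hindep : iIndepFun ε μ) (a : (t : ι) → κ t → ℝ) (s : Finset ι) (c : ℝ) :
    ∫ ω, (c + ∑ t ∈ s, ∑ i, a t i * ε t ω i) ^ 2 ∂μ = c ^ 2 + σ2 * ∑ t ∈ s, ∑ i, a t i ^ 2 := by
  have hind : iIndepFun (fun t ω => ∑ i, a t i * ε t ω i) μ :=
    hindep.comp (fun t x => ∑ i, a t i * x i) fun t => by fun_prop
  rw [integral_sq_const_add_sum_of_indep
    (fun t _ => memLp_finsetSum _ fun i _ => (hL2 t i).const_mul (a t i))
    (fun t _ => integral_sum_mul_eq_zero (hL2 t) (hmean t) (a t))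
    (fun t _ k _ htk => hind.indepFun htk) c, mul_sum]
  exact congrArg _
    (sum_congr rfl fun t _ => variance_sum_mul_of_cov (hL2 t) (hmean t) (hcov t) (a t))

end Noise

theorem early_stopping_oracle_rate_general
    {Ω : Type} [MeasurableSpace Ω] (μ : Measure Ω) [IsProbabilityMeasure μ]
    (T p : ℕ)
    (n : Fin T → ℕ) (hn : ∀ t, 0 < n t)
    (X : (t : Fin T) → Matrix (Fin (n t)) (Fin p) ℝ)
    (U : Matrix (Fin p) (Fin p) ℝ) (hU : Uᵀ * U = 1)
    (γ : Fin T → Fin p → ℝ) (hγ : ∀ t j, 0 ≤ γ t j)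
    (hSig : ∀ t, ((n t : ℝ))⁻¹ • ((X t)ᵀ * X t) = U * Matrix.diagonal (γ t) * Uᵀ)
    (wstar : Fin p → ℝ) (hwstar : ∀ j, ∑ k, U k j * wstar k ≠ 0)
    (σ2 : ℝ) (hσ2 : 0 < σ2)
    (ε : (t : Fin T) → Ω → Fin (n t) → ℝ)
    (hεL2 : ∀ t i, MemLp (fun ω => ε t ω i) 2 μ)
    (hmean : ∀ t i, ∫ ω, ε t ω i ∂μ = 0)
    (hcov : ∀ t i i', ∫ ω, ε t ω i * ε t ω i' ∂μ = if i = i' then σ2 else 0)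
    (hindep : iIndepFun ε μ)
    -- learning rates and iteration counts
    (s : Fin T → Fin p → ℝ) (m : Fin T → ℕ)
    (hsm : ∀ (t : Fin T) (j : Fin p),
      (1 - s t j * γ t j) ^ m t
        = 1 - γ t j * n t / (σ2 / (∑ k, U k j * wstar k) ^ 2
            + ∑ τ ∈ Finset.univ.filter (fun τ => τ ≤ t), γ τ j * n τ))
    -- the early stopping estimator
    (wES : ℕ → Ω → Fin p → ℝ) (hES0 : ∀ ω, wES 0 ω = 0)
    (gd : (t : Fin T) → ℕ → Ω → Fin p → ℝ)
    (hgd0 : ∀ (t : Fin T) (ω : Ω), gd t 0 ω = wES (t : ℕ) ω)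
    (hgd : ∀ (t : Fin T) (τ : ℕ) (ω : Ω), gd t (τ + 1) ω
      = gd t τ ω - (n t : ℝ)⁻¹ • ((U * Matrix.diagonal (s t) * Uᵀ) *ᵥ
          ((X t)ᵀ *ᵥ (X t *ᵥ gd t τ ω - (X t *ᵥ wstar + ε t ω)))))
    (hESstep : ∀ (t : Fin T) (ω : Ω), wES ((t : ℕ) + 1) ω = gd t (m t) ω) :
    ∀ t : Fin T,
      ∫ ω, ∑ j, (wES ((t : ℕ) + 1) ω j - wstar j) ^ 2 ∂μ
        = ∑ j, σ2 / (σ2 / (∑ k, U k j * wstar k) ^ 2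
            + ∑ τ ∈ Finset.univ.filter (fun τ => τ ≤ t), γ τ j * n τ) := by
  intro t
  simp only [filter_ge_eq_Iic] at hsm ⊢
  set v : Fin p → ℝ := fun j => ∑ k, U k j * wstar k
  set D : Fin T → Fin p → ℝ := fun r j => σ2 / v j ^ 2 + ∑ τ ∈ Iic r, γ τ j * n τ
  have hn' (r : Fin T) : (n r : ℝ) ≠ 0 := by exact_mod_cast (hn r).ne'
  have hD (r : Fin T) (j : Fin p) : 0 < D r j :=
    add_pos_of_pos_of_nonneg (div_pos hσ2 (pow_two_pos_of_ne_zero (hwstar j)))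
      (sum_nonneg fun τ _ => mul_nonneg (hγ τ j) (Nat.cast_nonneg _))
  have hcoord (ω : Ω) (j : Fin p) : (Uᵀ *ᵥ (wES (t + 1) ω - wstar)) j
      = (-(σ2 / v j) + ∑ τ ∈ Iic t, ∑ i, (X τ * U) i j * ε τ ω i) / D t j := by
    have hprior : σ2 / v j ^ 2 * (Uᵀ *ᵥ (wES 0 ω - wstar)) j = -(σ2 / v j) := by
      have hv : v j ≠ 0 := hwstar j
      simp only [hES0, zero_sub, mulVec_neg, Pi.neg_apply]
      simp only [mulVec, dotProduct, transpose_apply, v]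
      field_simp
    rw [eq_div_iff (hD t j).ne', mul_comm, ← hprior]
    exact precision_mul_transpose_mulVec_early_stopping (w := (wES · ω)) (g := (gd · · ω)) hU hn'
      hSig (hgd0 · ω) (hgd · · ω) (hESstep · ω) (fun r => (hD r j).ne') (hsm · j) t
  have hrisk (j : Fin p) :
      ∫ ω, (-(σ2 / v j) + ∑ τ ∈ Iic t, ∑ i, (X τ * U) i j * ε τ ω i) ^ 2 / D t j ^ 2 ∂μ
        = σ2 / D t j := by
    rw [integral_div, integral_sq_const_add_sum_noise hεL2 hmean hcov hindep]
    have hv : v j ≠ 0 := hwstar j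
    have hDt := (hD t j).ne'
    simp only [sum_sq_mul_apply hU (hn' _) (hSig _), D, mul_comm (n _ : ℝ)] at hDt ⊢
    field_simp
  calc ∫ ω, ∑ j, (wES (t + 1) ω j - wstar j) ^ 2 ∂μ
      = ∫ ω, ∑ j, (-(σ2 / v j) + ∑ τ ∈ Iic t, ∑ i, (X τ * U) i j * ε τ ω i) ^ 2 / D t j ^ 2 ∂μ := by
        refine integral_congr_ae (ae_of_all _ fun ω => ?_)
        simpa only [Pi.sub_apply, hcoord, div_pow] using
          (sum_sq_transpose_mulVec (mul_eq_one_comm.mp hU) (wES (t + 1) ω - wstar)).symm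
    _ = ∑ j, σ2 / D t j := by
        rw [integral_finsetSum _ fun j _ => (memLp_const_add_sum_sum_mul hεL2
          (fun τ i => (X τ * U) i j) (Iic t) (-(σ2 / v j))).integrable_sq.div_const _]
        exact sum_congr rfl fun j _ => hrisk j

/-- **Oracle rate of early stopping, Corollary 5.2.**
Under the shared assumptions with `u_jᵀ w* ≠ 0` for every `j`, if the
learning-rate matrices `A_t = U S_t Uᵀ` and iteration counts `m_t ≥ 1` satisfy
`(1 − s_j^{(t)} γ_j^{(t)})^{m_t}
   = 1 − γ_j^{(t)} n_t / (σ²/e_j^{(0)} + ∑_{τ≤t} γ_j^{(τ)} n_τ)`,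
then the early stopping estimator satisfies, for every `t ∈ [T]`,
`L(ŵ_t^{ES}) = ∑_j σ²/(σ²/e_j^{(0)} + ∑_{τ≤t} γ_j^{(τ)} n_τ)`. -/
theorem early_stopping_oracle_rate
    {Ω : Type} [MeasurableSpace Ω] (μ : Measure Ω) [IsProbabilityMeasure μ]
    (T p : ℕ)
    (n : Fin T → ℕ) (hn : ∀ t, 0 < n t)
    (X : (t : Fin T) → Matrix (Fin (n t)) (Fin p) ℝ)
    (U : Matrix (Fin p) (Fin p) ℝ) (hU : Uᵀ * U = 1)
    (γ : Fin T → Fin p → ℝ) (hγ : ∀ t j, 0 ≤ γ t j)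
    (hSig : ∀ t, ((n t : ℝ))⁻¹ • ((X t)ᵀ * X t) = U * Matrix.diagonal (γ t) * Uᵀ)
    (hfull : ∀ j, 0 < ∑ t, γ t j)
    (wstar : Fin p → ℝ) (hwstar : ∀ j, ∑ k, U k j * wstar k ≠ 0)
    (σ2 : ℝ) (hσ2 : 0 < σ2)
    (ε : (t : Fin T) → Ω → Fin (n t) → ℝ)
    (hεL2 : ∀ t i, MemLp (fun ω => ε t ω i) 2 μ)
    (hmean : ∀ t i, ∫ ω, ε t ω i ∂μ = 0)
    (hcov : ∀ t i i', ∫ ω, ε t ω i * ε t ω i' ∂μ = if i = i' then σ2 else 0)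
    (hindep : iIndepFun ε μ)
    -- learning rates and iteration counts
    (s : Fin T → Fin p → ℝ) (m : Fin T → ℕ) (hm : ∀ t, 1 ≤ m t)
    (hsm : ∀ (t : Fin T) (j : Fin p),
      (1 - s t j * γ t j) ^ m t
        = 1 - γ t j * n t / (σ2 / (∑ k, U k j * wstar k) ^ 2
            + ∑ τ ∈ Finset.univ.filter (fun τ => τ ≤ t), γ τ j * n τ))
    -- the early stopping estimator
    (wES : ℕ → Ω → Fin p → ℝ) (hES0 : ∀ ω, wES 0 ω = 0)
    (gd : (t : Fin T) → ℕ → Ω → Fin p → ℝ)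
    (hgd0 : ∀ (t : Fin T) (ω : Ω), gd t 0 ω = wES (t : ℕ) ω)
    (hgd : ∀ (t : Fin T) (τ : ℕ) (ω : Ω), gd t (τ + 1) ω
      = gd t τ ω - (n t : ℝ)⁻¹ • ((U * Matrix.diagonal (s t) * Uᵀ) *ᵥ
          ((X t)ᵀ *ᵥ (X t *ᵥ gd t τ ω - (X t *ᵥ wstar + ε t ω)))))
    (hESstep : ∀ (t : Fin T) (ω : Ω), wES ((t : ℕ) + 1) ω = gd t (m t) ω) :
    ∀ t : Fin T,
      ∫ ω, ∑ j, (wES ((t : ℕ) + 1) ω j - wstar j) ^ 2 ∂μ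
        = ∑ j, σ2 / (σ2 / (∑ k, U k j * wstar k) ^ 2
            + ∑ τ ∈ Finset.univ.filter (fun τ => τ ≤ t), γ τ j * n τ) :=
  early_stopping_oracle_rate_general μ T p n hn X U hU γ hγ hSig wstar hwstar σ2 hσ2 ε hεL2 hmean
    hcov hindep s m hsm wES hES0 gd hgd0 hgd hESstep
end
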